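/- arXiv:2012.11280 — 4 statements merged into one kernel-verified Lean document; each statement's English description precedes it below -/
import Mathlib

section
/- If P e_j ≠ c P e_i for all i ≠ j and all scalars c, then e_j is the unique solution of the weighted basis pursuit problem: minimize ∑_i ‖P e_i‖₂ |x_i| subject to P x = P e_j. -/
/-!
Write `a i = P e_i`. Feasibility of `x` says `∑ i, x i • a i = a j`, hence
`‖a j‖² = ∑ i, x i * ⟪a j, a i⟫ ≤ ‖a j‖ * ∑ i, ‖a i‖ * |x i|` by Cauchy–Schwarz.
A feasible `x ≠ e_j` has `x k ≠ 0` for some `k ≠ j`, and as `a k` is not parallel to `a j`,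
Cauchy–Schwarz is strict in that term.
-/

open Matrix Finset

/-- Euclidean norm of a vector in `Fin n → ℝ`. -/
noncomputable def enorm2 {n : ℕ} (v : Fin n → ℝ) : ℝ := Real.sqrt (∑ i, v i ^ 2)

section

variable {F : Type*} [NormedAddCommGroup F] [InnerProductSpace ℝ F]

theorem abs_real_inner_lt_norm_mul_norm {x y : F} (hy : y ≠ 0) (h : ∀ c : ℝ, x ≠ c • y) :
    |inner ℝ x y| < ‖x‖ * ‖y‖ := by
  refine (abs_real_inner_le_norm x y).lt_of_ne fun heq => ?_
  have hx : x ≠ 0 := by simpa using h 0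
  rw [← Real.norm_eq_abs, real_inner_comm, mul_comm] at heq
  obtain ⟨r, -, rfl⟩ := (norm_inner_eq_norm_iff hy hx).mp heq
  exact h r rfl

variable {ι : Type*} [Fintype ι] [DecidableEq ι]

theorem exists_ne_ne_zero_of_sum_smul_eq {a : ι → F} {x : ι → ℝ} {j : ι}
    (hsum : ∑ i, x i • a i = a j) (ha : a j ≠ 0) (hx : x ≠ Pi.single j 1) :
    ∃ i ≠ j, x i ≠ 0 := by
  by_contra! hzero
  have hx_single : x = Pi.single j (x j) := by
    ext i
    rcases eq_or_ne i j with rfl | hij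
    · simp
    · simp [hij, hzero i hij]
  have hxj : x j = 1 := by
    rw [Finset.sum_eq_single j (fun i _ hij => by simp [hzero i hij]) (by simp)] at hsum
    exact smul_left_injective ℝ ha (by simpa using hsum)
  exact hx (hxj ▸ hx_single)

theorem norm_lt_sum_norm_mul_abs_of_sum_smul_eq {a : ι → F} {x : ι → ℝ} {j : ι}
    (hsum : ∑ i, x i • a i = a j) (ha : ∀ i, a i ≠ 0) (hpar : ∀ i ≠ j, ∀ c : ℝ, a j ≠ c • a i)
    (hx : x ≠ Pi.single j 1) :
    ‖a j‖ < ∑ i, ‖a i‖ * |x i| := by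
  obtain ⟨k, hkj, hxk⟩ := exists_ne_ne_zero_of_sum_smul_eq hsum (ha j) hx
  have hle : ∀ i, x i * inner ℝ (a j) (a i) ≤ ‖a j‖ * (‖a i‖ * |x i|) := fun i =>
    calc x i * inner ℝ (a j) (a i) ≤ |x i| * |inner ℝ (a j) (a i)| := by
          rw [← abs_mul]; exact le_abs_self _
      _ ≤ |x i| * (‖a j‖ * ‖a i‖) := by gcongr; exact abs_real_inner_le_norm _ _
      _ = ‖a j‖ * (‖a i‖ * |x i|) := by ring
  have hlt : x k * inner ℝ (a j) (a k) < ‖a j‖ * (‖a k‖ * |x k|) :=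
    calc x k * inner ℝ (a j) (a k) ≤ |x k| * |inner ℝ (a j) (a k)| := by
          rw [← abs_mul]; exact le_abs_self _
      _ < |x k| * (‖a j‖ * ‖a k‖) := by
          gcongr
          exact abs_real_inner_lt_norm_mul_norm (ha k) (hpar k hkj)
      _ = ‖a j‖ * (‖a k‖ * |x k|) := by ring
  have hnorm_pos : 0 < ‖a j‖ := norm_pos_iff.mpr (ha j)
  refine lt_of_mul_lt_mul_left ?_ hnorm_pos.le
  calc ‖a j‖ * ‖a j‖ = inner ℝ (a j) (∑ i, x i • a i) := by
        rw [hsum, real_inner_self_eq_norm_mul_norm]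
    _ = ∑ i, x i * inner ℝ (a j) (a i) := by simp only [inner_sum, real_inner_smul_right]
    _ < ∑ i, ‖a j‖ * (‖a i‖ * |x i|) :=
        Finset.sum_lt_sum (fun i _ => hle i) ⟨k, Finset.mem_univ k, hlt⟩
    _ = ‖a j‖ * ∑ i, ‖a i‖ * |x i| := (Finset.mul_sum ..).symm

end

theorem enorm2_eq_norm_toLp {n : ℕ} (v : Fin n → ℝ) : enorm2 v = ‖WithLp.toLp 2 v‖ := by
  simp [enorm2, EuclideanSpace.norm_eq, sq_abs]

theorem sum_smul_mulVec_single {m ι R : Type*} [Fintype ι] [DecidableEq ι] [CommSemiring R]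
    (M : Matrix m ι R) (x : ι → R) :
    ∑ i, x i • M *ᵥ Pi.single i 1 = M *ᵥ x := by
  simp_rw [← mulVec_smul, ← mulVec_sum, ← Pi.single_smul, smul_eq_mul, mul_one,
    Finset.univ_sum_single]

theorem weighted_basis_pursuit_exact_recovery_general {n : ℕ}
    (P : Matrix (Fin n) (Fin n) ℝ)
    (hnz : ∀ i : Fin n, P.mulVec (Pi.single i 1) ≠ 0)
    (j : Fin n)
    (hpar : ∀ i : Fin n, i ≠ j → ∀ c : ℝ,
      P.mulVec (Pi.single j 1) ≠ c • P.mulVec (Pi.single i 1)) :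
    ∀ x : Fin n → ℝ, P.mulVec x = P.mulVec (Pi.single j 1) → x ≠ Pi.single j 1 →
      ∑ i, enorm2 (P.mulVec (Pi.single i 1)) * |(Pi.single j 1 : Fin n → ℝ) i| <
        ∑ i, enorm2 (P.mulVec (Pi.single i 1)) * |x i| := by
  intro x hfeas hx
  set a : Fin n → EuclideanSpace ℝ (Fin n) := fun i => WithLp.toLp 2 (P *ᵥ Pi.single i 1)
  have hsum : ∑ i, x i • a i = a j := by
    simp only [a, ← WithLp.toLp_smul, ← WithLp.toLp_sum, sum_smul_mulVec_single, hfeas]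
  have hlhs : ∑ i, enorm2 (P *ᵥ Pi.single i 1) * |(Pi.single j 1 : Fin n → ℝ) i| = ‖a j‖ := by
    rw [Finset.sum_eq_single j (fun i _ hij => by simp [hij]) (by simp)]
    simp [a, enorm2_eq_norm_toLp]
  rw [hlhs]
  simp only [enorm2_eq_norm_toLp]
  refine norm_lt_sum_norm_mul_abs_of_sum_smul_eq hsum (fun i => ?_) (fun i hij c => ?_) hx
  · simpa [a] using hnz i
  · simpa [a, ← WithLp.toLp_smul] using hpar i hij c

/-- If `P e_j ≠ c • P e_i` for all `i ≠ j` and all scalars `c`, then `e_j` is the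
unique solution of the weighted basis pursuit problem:
minimize `∑ i, ‖P e_i‖₂ * |x i|` subject to `P x = P e_j`. -/
theorem weighted_basis_pursuit_exact_recovery {n : ℕ}
    (P : Matrix (Fin n) (Fin n) ℝ) (hsymm : Pᵀ = P) (hidem : P * P = P)
    (hnz : ∀ i : Fin n, P.mulVec (Pi.single i 1) ≠ 0)
    (j : Fin n)
    (hpar : ∀ i : Fin n, i ≠ j → ∀ c : ℝ,
      P.mulVec (Pi.single j 1) ≠ c • P.mulVec (Pi.single i 1)) :
    ∀ x : Fin n → ℝ, P.mulVec x = P.mulVec (Pi.single j 1) → x ≠ Pi.single j 1 →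
      ∑ i, enorm2 (P.mulVec (Pi.single i 1)) * |(Pi.single j 1 : Fin n → ℝ) i| <
        ∑ i, enorm2 (P.mulVec (Pi.single i 1)) * |x i| :=
  weighted_basis_pursuit_exact_recovery_general P hnz j hpar
end

section
/- For any x = ∑_i c_i e_i satisfying P x = P e_j, one has ‖W e_j‖₁ ≤ ‖W x‖₁, i.e., ‖P e_j‖₂ ≤ ∑_i |c_i| ‖P e_i‖₂; moreover the inequality is strict whenever x ≠ e_j, provided no two projected basis vectors are parallel. -/
/-!
Writing `u i = P e_i`, the hypothesis says `u j = ∑ i, c i • u i`, so the inequality is the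
triangle inequality. The Euclidean norm is strictly convex, so equality forces every nonzero term
`c i • u i` onto the ray of `u j`; for `i ≠ j` this would make `u j` parallel to `u i`, hence
`c i = 0` off `j`, and then `c j = 1` since `u j ≠ 0`.
-/

open Matrix Finset

noncomputable def enormFin {n : ℕ} (v : Fin n → ℝ) : ℝ := Real.sqrt (∑ i, v i ^ 2)

theorem enormFin_eq_norm_toLp {n : ℕ} (v : Fin n → ℝ) :
    enormFin v = ‖WithLp.toLp 2 v‖ := by
  simp [enormFin, EuclideanSpace.norm_eq]

theorem Matrix.mulVec_eq_sum_smul_mulVec_single {m n R : Type*} [Fintype n] [DecidableEq n]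
    [CommSemiring R] (M : Matrix m n R) (c : n → R) :
    M *ᵥ c = ∑ i, c i • M *ᵥ Pi.single i 1 := by
  conv_lhs => rw [← univ_sum_single c]
  simp [mulVec_sum, mulVec_single]

section StrictConvex

variable {ι E : Type*} [NormedAddCommGroup E] [NormedSpace ℝ E]

theorem norm_sum_smul_le_sum_abs_mul_norm (s : Finset ι) (c : ι → ℝ) (u : ι → E) :
    ‖∑ i ∈ s, c i • u i‖ ≤ ∑ i ∈ s, |c i| * ‖u i‖ := by
  simpa only [norm_smul, Real.norm_eq_abs] using norm_sum_le s fun i => c i • u i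

theorem sameRay_sum_of_norm_sum_eq_sum_norm [StrictConvexSpace ℝ E] [DecidableEq ι]
    {s : Finset ι} {f : ι → E} (h : ‖∑ k ∈ s, f k‖ = ∑ k ∈ s, ‖f k‖) {i : ι} (hi : i ∈ s) :
    SameRay ℝ (f i) (∑ k ∈ s, f k) := by
  rw [← add_sum_erase s f hi, ← add_sum_erase s _ hi] at h
  rw [← add_sum_erase s f hi]
  have hsplit : ‖f i + ∑ k ∈ s.erase i, f k‖ = ‖f i‖ + ‖∑ k ∈ s.erase i, f k‖ :=
    le_antisymm (norm_add_le _ _) (by linarith [norm_sum_le (s.erase i) f])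
  exact (SameRay.refl (f i)).add_right (sameRay_iff_norm_add.mpr hsplit)

theorem eq_single_of_sum_smul_eq_of_norm_eq [StrictConvexSpace ℝ E] [Fintype ι] [DecidableEq ι]
    {u : ι → E} (hu : ∀ i, u i ≠ 0) {j : ι} (hpar : ∀ i ≠ j, ∀ r : ℝ, u j ≠ r • u i)
    {c : ι → ℝ} (hc : ∑ i, c i • u i = u j) (hnorm : ‖u j‖ = ∑ i, |c i| * ‖u i‖) :
    c = Pi.single j 1 := by
  have hoff : ∀ i ≠ j, c i = 0 := by
    intro i hij
    by_contra hci
    have hray : SameRay ℝ (c i • u i) (u j) := by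
      rw [← hc]
      refine sameRay_sum_of_norm_sum_eq_sum_norm (f := fun k => c k • u k) ?_ (mem_univ i)
      simpa only [hc, norm_smul, Real.norm_eq_abs] using hnorm
    obtain ⟨r, -, hr⟩ := hray.exists_pos_left (smul_ne_zero hci (hu i)) (hu j)
    exact hpar i hij (r * c i) (by rw [← hr, smul_smul])
  have hcj : c j • u j = u j := by
    rwa [Fintype.sum_eq_single j fun i hij => by rw [hoff i hij, zero_smul]] at hc
  have hcj1 : c j = 1 := by
    by_contra hne
    exact hu j (smul_right_injective E (sub_ne_zero.mpr hne) (by simp [sub_smul, hcj]))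
  ext i
  by_cases hij : i = j
  · subst hij; simp [hcj1]
  · simp [hoff i hij, hij]

end StrictConvex

theorem weighted_l1_lower_bound_general {n : ℕ}
    (P : Matrix (Fin n) (Fin n) ℝ)
    (hnz : ∀ i : Fin n, P.mulVec (Pi.single i 1) ≠ 0)
    (j : Fin n) :
    (∀ c : Fin n → ℝ,
        P.mulVec (fun k => c k) = P.mulVec (Pi.single j 1) →
        enormFin (P.mulVec (Pi.single j 1)) ≤ ∑ i, |c i| * enormFin (P.mulVec (Pi.single i 1)))
    ∧
    ((∀ i : Fin n, i ≠ j → ∀ cc : ℝ,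
        P.mulVec (Pi.single j 1) ≠ cc • P.mulVec (Pi.single i 1)) →
      ∀ c : Fin n → ℝ,
        P.mulVec (fun k => c k) = P.mulVec (Pi.single j 1) →
        (fun k => c k) ≠ (Pi.single j 1 : Fin n → ℝ) →
        enormFin (P.mulVec (Pi.single j 1)) < ∑ i, |c i| * enormFin (P.mulVec (Pi.single i 1))) := by
  set u : Fin n → EuclideanSpace ℝ (Fin n) := fun i => WithLp.toLp 2 (P *ᵥ Pi.single i 1)
  simp only [enormFin_eq_norm_toLp]
  have hsum : ∀ c : Fin n → ℝ, P *ᵥ c = P *ᵥ Pi.single j 1 → ∑ i, c i • u i = u j := by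
    intro c hc
    simp only [u, ← WithLp.toLp_smul, ← WithLp.toLp_sum, ← mulVec_eq_sum_smul_mulVec_single, hc]
  have hle : ∀ c : Fin n → ℝ, P *ᵥ c = P *ᵥ Pi.single j 1 → ‖u j‖ ≤ ∑ i, |c i| * ‖u i‖ :=
    fun c hc => hsum c hc ▸ norm_sum_smul_le_sum_abs_mul_norm _ c u
  refine ⟨hle, fun hpar c hc hne => (hle c hc).lt_of_ne fun heq => hne ?_⟩
  refine eq_single_of_sum_smul_eq_of_norm_eq (u := u) (fun i => ?_) (fun i hij r => ?_)
    (hsum c hc) heq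
  · simpa [u] using hnz i
  · simpa [u, ← WithLp.toLp_smul] using hpar i hij r

/-- For any `x = ∑ i, c i • e_i` satisfying `P x = P e_j`, one has
`‖W e_j‖₁ ≤ ‖W x‖₁`, i.e. `‖P e_j‖₂ ≤ ∑ i, |c i| * ‖P e_i‖₂`; moreover the inequality is strict
whenever `x ≠ e_j`, provided no two projected basis vectors are parallel. -/
theorem weighted_l1_lower_bound {n : ℕ}
    (P : Matrix (Fin n) (Fin n) ℝ) (hsymm : Pᵀ = P) (hidem : P * P = P)
    (hnz : ∀ i : Fin n, P.mulVec (Pi.single i 1) ≠ 0)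
    (j : Fin n) :
    (∀ c : Fin n → ℝ,
        P.mulVec (fun k => c k) = P.mulVec (Pi.single j 1) →
        enormFin (P.mulVec (Pi.single j 1)) ≤ ∑ i, |c i| * enormFin (P.mulVec (Pi.single i 1)))
    ∧
    ((∀ i : Fin n, i ≠ j → ∀ cc : ℝ,
        P.mulVec (Pi.single j 1) ≠ cc • P.mulVec (Pi.single i 1)) →
      ∀ c : Fin n → ℝ,
        P.mulVec (fun k => c k) = P.mulVec (Pi.single j 1) →
        (fun k => c k) ≠ (Pi.single j 1 : Fin n → ℝ) →
        enormFin (P.mulVec (Pi.single j 1)) < ∑ i, |c i| * enormFin (P.mulVec (Pi.single i 1))) :=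
  weighted_l1_lower_bound_general P hnz j
end

section
/- The j-th component of W⁻¹ P e_j equals ‖P e_j‖₂, and it is a maximum: for every i, the i-th component of W⁻¹ P e_j satisfies [W⁻¹ P e_j]_i = ‖P e_j‖₂ ⟨P e_j/‖P e_j‖₂, P e_i/‖P e_i‖₂⟩ ≤ [W⁻¹ P e_j]_j. -/
/-! The columns `v_a = P e_a` of a symmetric idempotent `P` satisfy `⟨v_a, v_b⟩ = (PᵀP)_{ab} = P_{ab}`,
so `[W⁻¹ P e_j]_i = ⟨v_j, v_i⟩ / ‖v_i‖`: for `i = j` this is `‖v_j‖`, and in general it is at most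
`‖v_j‖` by Cauchy–Schwarz. -/

open Matrix Finset

noncomputable def enorm {n : ℕ} (v : Fin n → ℝ) : ℝ := Real.sqrt (∑ i, v i ^ 2)

/-- The `i`-th component of `W⁻¹ P e_j`, where `W` is diagonal with entries `‖P e_i‖₂`. -/
noncomputable def wInvP {n : ℕ} (P : Matrix (Fin n) (Fin n) ℝ) (j i : Fin n) : ℝ :=
  P.mulVec (Pi.single j 1) i / _root_.enorm (P.mulVec (Pi.single i 1))

section enorm

variable {n : ℕ}

lemma enorm_nonneg (v : Fin n → ℝ) : 0 ≤ _root_.enorm v := Real.sqrt_nonneg _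

lemma enorm_mul_self (v : Fin n → ℝ) : _root_.enorm v * _root_.enorm v = ∑ i, v i * v i := by
  simp_rw [← sq]
  exact Real.sq_sqrt (sum_nonneg fun i _ => sq_nonneg (v i))

lemma enorm_eq_zero_iff (v : Fin n → ℝ) : _root_.enorm v = 0 ↔ v = 0 := by
  rw [_root_.enorm, Real.sqrt_eq_zero (sum_nonneg fun i _ => sq_nonneg (v i)),
    sum_eq_zero_iff_of_nonneg fun i _ => sq_nonneg (v i), funext_iff]
  simp

lemma sum_mul_le_enorm_mul_enorm (u w : Fin n → ℝ) :
    ∑ k, u k * w k ≤ _root_.enorm u * _root_.enorm w :=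
  Real.sum_mul_le_sqrt_mul_sqrt _ u w

lemma enorm_mul_sum_normalized (u w : Fin n → ℝ) :
    _root_.enorm u * ∑ k, u k / _root_.enorm u * (w k / _root_.enorm w) =
      (∑ k, u k * w k) / _root_.enorm w := by
  by_cases hu : _root_.enorm u = 0
  · obtain rfl := (enorm_eq_zero_iff u).1 hu
    simp
  · simp_rw [div_mul_div_comm, ← sum_div, mul_div_assoc', mul_div_mul_left _ _ hu]

end enorm

lemma sum_mulVec_single_mul_of_symm_idem {ι R : Type*} [Fintype ι] [DecidableEq ι] [CommSemiring R]
    (P : Matrix ι ι R) (hsymm : Pᵀ = P) (hidem : P * P = P) (a b : ι) :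
    ∑ k, P.mulVec (Pi.single a 1) k * P.mulVec (Pi.single b 1) k = P a b := by
  conv_rhs => rw [← hidem, ← congrArg (· * P) hsymm]
  simp [mul_apply]

lemma wInvP_eq_sum_div {n : ℕ} (P : Matrix (Fin n) (Fin n) ℝ) (hsymm : Pᵀ = P) (hidem : P * P = P)
    (j i : Fin n) :
    wInvP P j i = (∑ k, P.mulVec (Pi.single j 1) k * P.mulVec (Pi.single i 1) k) /
      _root_.enorm (P.mulVec (Pi.single i 1)) := by
  rw [wInvP, sum_mulVec_single_mul_of_symm_idem P hsymm hidem, mulVec_single_one, col_apply,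
    ← transpose_apply P, hsymm]

theorem wInvP_max_property_general {n : ℕ}
    (P : Matrix (Fin n) (Fin n) ℝ) (hsymm : Pᵀ = P) (hidem : P * P = P)
    (j : Fin n) :
    wInvP P j j = _root_.enorm (P.mulVec (Pi.single j 1)) ∧
    ∀ i : Fin n,
      wInvP P j i =
        _root_.enorm (P.mulVec (Pi.single j 1)) *
          (∑ k, (P.mulVec (Pi.single j 1) k / _root_.enorm (P.mulVec (Pi.single j 1))) *
                (P.mulVec (Pi.single i 1) k / _root_.enorm (P.mulVec (Pi.single i 1)))) ∧
      wInvP P j i ≤ wInvP P j j := by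
  have hjj : wInvP P j j = _root_.enorm (P.mulVec (Pi.single j 1)) := by
    rw [wInvP_eq_sum_div P hsymm hidem, ← enorm_mul_self, mul_self_div_self]
  refine ⟨hjj, fun i => ⟨?_, ?_⟩⟩
  · rw [enorm_mul_sum_normalized, wInvP_eq_sum_div P hsymm hidem]
  · rw [hjj, wInvP_eq_sum_div P hsymm hidem]
    exact div_le_of_le_mul₀ (enorm_nonneg _) (enorm_nonneg _) (sum_mul_le_enorm_mul_enorm _ _)

/-- The `j`-th component of `W⁻¹ P e_j` equals `‖P e_j‖₂`, and it is a maximum: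
for every `i`, `[W⁻¹ P e_j]_i = ‖P e_j‖₂ * ⟨P e_j/‖P e_j‖₂, P e_i/‖P e_i‖₂⟩ ≤ [W⁻¹ P e_j]_j`. -/
theorem wInvP_max_property {n : ℕ}
    (P : Matrix (Fin n) (Fin n) ℝ) (hsymm : Pᵀ = P) (hidem : P * P = P)
    (hnz : ∀ i : Fin n, P.mulVec (Pi.single i 1) ≠ 0)
    (j : Fin n) :
    wInvP P j j = _root_.enorm (P.mulVec (Pi.single j 1)) ∧
    ∀ i : Fin n,
      wInvP P j i =
        _root_.enorm (P.mulVec (Pi.single j 1)) *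
          (∑ k, (P.mulVec (Pi.single j 1) k / _root_.enorm (P.mulVec (Pi.single j 1))) *
                (P.mulVec (Pi.single i 1) k / _root_.enorm (P.mulVec (Pi.single i 1)))) ∧
      wInvP P j i ≤ wInvP P j j :=
  wInvP_max_property_general P hsymm hidem j
end

section
/- Suppose A e_m + A e_n = c A e_j for some scalar c and index j, and assume no two columns of A are parallel. Then ‖W (c e_j)‖₁ < ‖W(e_m + e_n)‖₁, where W is the diagonal weight matrix with entries ‖P e_i‖₂ and P = A† A. Consequently e_m + e_n is not a solution of the weighted basis pursuit problem min ‖W x‖₁ subject to P x = P e_m + P e_n. -/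
/-! For `P = B * A`, `A * B * A = A` gives `A * P = A`. Hence `P` carries the relation among the
columns of `A` to `P (c e_j) = P e_m + P e_n`, while a parallelism between `P e_m` and `P e_n`
would be carried back to one between `A e_m` and `A e_n`. So the weighted cost
`|c| ‖P e_j‖ = ‖P e_m + P e_n‖` of `c e_j` lies strictly below the cost `‖P e_m‖ + ‖P e_n‖` of
`e_m + e_n`, by the strict triangle inequality. -/

open Matrix Finset

noncomputable def eucNorm {n : ℕ} (v : Fin n → ℝ) : ℝ := Real.sqrt (∑ i, v i ^ 2)

lemma mulVec_mul_mulVec_of_mul_mul_eq {R l m : Type*} [CommRing R] [Fintype l] [Fintype m]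
    {A : Matrix l m R} {B : Matrix m l R} (h : A * B * A = A) (v : m → R) :
    A *ᵥ ((B * A) *ᵥ v) = A *ᵥ v := by
  rw [mulVec_mulVec, ← Matrix.mul_assoc, h]

lemma not_sameRay_of_forall_ne_smul {R M : Type*} [Field R] [LinearOrder R]
    [IsStrictOrderedRing R] [AddCommGroup M] [Module R M] {x y : M}
    (hyx : ∀ t : R, y ≠ t • x) (hxy : ∀ t : R, x ≠ t • y) : ¬ SameRay R x y := by
  intro h
  have hx : x ≠ 0 := by simpa using hxy 0
  obtain ⟨r, -, hr⟩ := h.exists_nonneg_left hx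
  exact hyx r hr.symm

lemma eucNorm_eq_norm_toLp {n : ℕ} (v : Fin n → ℝ) : eucNorm v = ‖WithLp.toLp 2 v‖ := by
  simp [EuclideanSpace.norm_eq, eucNorm]

lemma eucNorm_smul {n : ℕ} (c : ℝ) (v : Fin n → ℝ) : eucNorm (c • v) = |c| * eucNorm v := by
  rw [eucNorm_eq_norm_toLp, eucNorm_eq_norm_toLp, WithLp.toLp_smul, norm_smul, Real.norm_eq_abs]

lemma eucNorm_add_lt_of_not_sameRay {n : ℕ} {u v : Fin n → ℝ} (h : ¬ SameRay ℝ u v) :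
    eucNorm (u + v) < eucNorm u + eucNorm v := by
  simp only [eucNorm_eq_norm_toLp, WithLp.toLp_add]
  exact norm_add_lt_of_not_sameRay fun h' =>
    h (by simpa using h'.map (WithLp.linearEquiv 2 ℝ (Fin n → ℝ)).toLinearMap)

section WeightedL1

variable {ι : Type*} [Fintype ι] [DecidableEq ι] (w : ι → ℝ)

lemma sum_mul_abs_smul_single (c : ℝ) (j : ι) :
    ∑ i, w i * |(c • Pi.single j 1 : ι → ℝ) i| = |c| * w j := by
  rw [Finset.sum_eq_single j (fun i _ hij => by simp [hij]) (by simp)]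
  simp [mul_comm]

lemma sum_mul_abs_single_add_single (m n : ι) :
    ∑ i, w i * |(Pi.single m 1 + Pi.single n 1 : ι → ℝ) i| = w m + w n := by
  have habs : ∀ i, |(Pi.single m 1 + Pi.single n 1 : ι → ℝ) i| =
      (Pi.single m 1 : ι → ℝ) i + (Pi.single n 1 : ι → ℝ) i := fun i =>
    abs_of_nonneg (by simp only [Pi.add_apply, Pi.single_apply]; positivity)
  simp only [habs, mul_add, Finset.sum_add_distrib]
  simp [Pi.single_apply]

end WeightedL1

theorem two_sources_not_recovered_general {M N : ℕ}
    (A : Matrix (Fin M) (Fin N) ℝ) (B : Matrix (Fin N) (Fin M) ℝ)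
    (h1 : A * B * A = A)
    (m n j : Fin N) (hmn : m ≠ n)
    (c : ℝ)
    (hc : A.mulVec (Pi.single m 1) + A.mulVec (Pi.single n 1) = c • A.mulVec (Pi.single j 1))
    (hpar : ∀ i i' : Fin N, i ≠ i' → ∀ t : ℝ,
      A.mulVec (Pi.single i' 1) ≠ t • A.mulVec (Pi.single i 1)) :
    (B * A).mulVec (c • (Pi.single j 1 : Fin N → ℝ)) =
        (B * A).mulVec ((Pi.single m 1 + Pi.single n 1 : Fin N → ℝ)) ∧
    ∑ i, eucNorm ((B * A).mulVec (Pi.single i 1)) * |(c • (Pi.single j 1 : Fin N → ℝ)) i| <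
      ∑ i, eucNorm ((B * A).mulVec (Pi.single i 1)) *
        |((Pi.single m 1 + Pi.single n 1 : Fin N → ℝ)) i| := by
  set e : Fin N → Fin N → ℝ := fun i => Pi.single i 1
  have hfeas : (B * A) *ᵥ (c • e j) = (B * A) *ᵥ e m + (B * A) *ᵥ e n := by
    simp only [← mulVec_mulVec, ← mulVec_add, mulVec_smul A, e, hc]
  refine ⟨by rw [hfeas, mulVec_add], ?_⟩
  have hsep : ¬ SameRay ℝ ((B * A) *ᵥ e m) ((B * A) *ᵥ e n) := fun h => by
    have hA := h.map (mulVecLin A)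
    simp only [mulVecLin_apply, mulVec_mul_mulVec_of_mul_mul_eq h1] at hA
    exact not_sameRay_of_forall_ne_smul (hpar m n hmn) (hpar n m hmn.symm) hA
  rw [sum_mul_abs_smul_single, sum_mul_abs_single_add_single]
  calc |c| * eucNorm ((B * A) *ᵥ e j)
      = eucNorm ((B * A) *ᵥ e m + (B * A) *ᵥ e n) := by rw [← eucNorm_smul, ← mulVec_smul, hfeas]
    _ < _ := eucNorm_add_lt_of_not_sameRay hsep

/-- If `A e_m + A e_n = c • A e_j` and no two columns of `A` are parallel, then
`‖W (c e_j)‖₁ < ‖W (e_m + e_n)‖₁` where `W` is diagonal with entries `‖P e_i‖₂`, `P = A† A`.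
Consequently `e_m + e_n` is not a solution of the weighted basis pursuit problem
`min ‖W x‖₁ s.t. P x = P e_m + P e_n` (since `c • e_j` is feasible and strictly better). -/
theorem two_sources_not_recovered {M N : ℕ}
    (A : Matrix (Fin M) (Fin N) ℝ) (B : Matrix (Fin N) (Fin M) ℝ)
    (h1 : A * B * A = A) (h2 : B * A * B = B)
    (h3 : (A * B)ᵀ = A * B) (h4 : (B * A)ᵀ = B * A)
    (m n j : Fin N) (hmn : m ≠ n) (hmj : m ≠ j) (hnj : n ≠ j)
    (c : ℝ)
    (hc : A.mulVec (Pi.single m 1) + A.mulVec (Pi.single n 1) = c • A.mulVec (Pi.single j 1))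
    (hpar : ∀ i i' : Fin N, i ≠ i' → ∀ t : ℝ,
      A.mulVec (Pi.single i' 1) ≠ t • A.mulVec (Pi.single i 1)) :
    (B * A).mulVec (c • (Pi.single j 1 : Fin N → ℝ)) =
        (B * A).mulVec ((Pi.single m 1 + Pi.single n 1 : Fin N → ℝ)) ∧
    ∑ i, eucNorm ((B * A).mulVec (Pi.single i 1)) * |(c • (Pi.single j 1 : Fin N → ℝ)) i| <
      ∑ i, eucNorm ((B * A).mulVec (Pi.single i 1)) *
        |((Pi.single m 1 + Pi.single n 1 : Fin N → ℝ)) i| :=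
  two_sources_not_recovered_general A B h1 m n j hmn c hc hpar
end
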